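/- arXiv:1808.00016 — 4 statements merged into one kernel-verified Lean document; each statement's English description precedes it below -/
import Mathlib

section
/- A row-stochastic n×n matrix A satisfies per(A) = 1 if and only if A is a permutation matrix. -/
/-- The permanent of a square matrix. -/
def permanent {n : ℕ} (A : Matrix (Fin n) (Fin n) ℝ) : ℝ :=
  ∑ σ : Equiv.Perm (Fin n), ∏ i, A i (σ i)

theorem permanent_eq_one_iff_permutation {n : ℕ} (A : Matrix (Fin n) (Fin n) ℝ)
    (hpos : ∀ i j, 0 ≤ A i j) (hrow : ∀ i, ∑ j, A i j = 1) :
    permanent A = 1 ↔ ∃ σ : Equiv.Perm (Fin n), ∀ i j, A i j = if σ i = j then 1 else 0 := by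
  constructor
  · intro hper
    set P : (Fin n → Fin n) → ℝ := fun f => ∏ i, A i (f i) with hP
    have hPnn : ∀ f, 0 ≤ P f := fun f => Finset.prod_nonneg fun i _ => hpos i (f i)
    have htot : ∑ f : Fin n → Fin n, P f = 1 := by
      have h1 : (1:ℝ) = ∏ i, ∑ j, A i j := by simp [hrow]
      rw [h1, Finset.prod_univ_sum (fun _ : Fin n => (Finset.univ : Finset (Fin n)))
        (fun i j => A i j)]
      simp [hP]
    have hinj : Function.Injective (fun σ : Equiv.Perm (Fin n) => (σ : Fin n → Fin n)) :=
      fun σ τ h => Equiv.coe_fn_injective h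
    set s : Finset (Fin n → Fin n) :=
      Finset.univ.image (fun σ : Equiv.Perm (Fin n) => ⇑σ) with hs
    have himg : permanent A = ∑ f ∈ s, P f := by
      rw [hs, Finset.sum_image (fun a _ b _ h => hinj h)]
      rfl
    have hcompl : ∑ f ∈ Finset.univ \ s, P f = 0 := by
      have := Finset.sum_sdiff (s.subset_univ) (f := P)
      rw [htot] at this
      rw [← himg] at this
      linarith
    have hzero : ∀ f ∈ Finset.univ \ s, P f = 0 := by
      intro f hf
      exact (Finset.sum_eq_zero_iff_of_nonneg (fun g _ => hPnn g)).mp hcompl f hf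
    have hbij : ∀ f : Fin n → Fin n, (∀ i, 0 < A i (f i)) → Function.Bijective f := by
      intro f hf
      by_contra hnb
      have hmem : f ∉ s := by
        intro hm
        obtain ⟨σ, _, hσ⟩ := Finset.mem_image.mp hm
        exact hnb (hσ ▸ σ.bijective)
      have h0 : P f = 0 := hzero f (by simp [hmem])
      have hpos' : 0 < P f := Finset.prod_pos (fun i _ => hf i)
      linarith
    have hex : ∀ i, ∃ j, 0 < A i j := by
      intro i
      by_contra h
      push_neg at h
      have hz : ∀ j, A i j = 0 := fun j => le_antisymm (h j) (hpos i j)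
      have := hrow i
      simp [hz] at this
    choose c hc using hex
    have hgc : Function.Bijective c := hbij c hc
    have hz' : ∀ i j, j ≠ c i → A i j = 0 := by
      intro i j hne
      by_contra h
      have hj : 0 < A i j := lt_of_le_of_ne (hpos i j) (Ne.symm h)
      have hupd : Function.Bijective (Function.update c i j) := by
        apply hbij
        intro k
        by_cases hk : k = i
        · subst hk; simpa using hj
        · simpa [Function.update_of_ne hk] using hc k
      obtain ⟨k, hk⟩ := hupd.surjective (c i)
      by_cases hki : k = i
      · subst hki
        rw [Function.update_self] at hk
        exact hne hk
      · rw [Function.update_of_ne hki] at hk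
        exact hki (hgc.injective hk)
    have hone : ∀ i, A i (c i) = 1 := by
      intro i
      have hri := hrow i
      rw [Finset.sum_eq_single (c i)] at hri
      · exact hri
      · intro j _ hj; exact hz' i j hj
      · intro h; exact absurd (Finset.mem_univ (c i)) h
    refine ⟨Equiv.ofBijective c hgc, fun i j => ?_⟩
    have hσ : (Equiv.ofBijective c hgc) i = c i := rfl
    rw [hσ]
    by_cases h : c i = j
    · subst h; simp [hone i]
    · simp [h, hz' i j (fun he => h he.symm)]
  · rintro ⟨σ, hσ⟩
    unfold permanent
    rw [Finset.sum_eq_single σ]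
    · simp [hσ]
    · intro τ _ hτ
      have hex : ∃ i, σ i ≠ τ i := by
        by_contra h
        push_neg at h
        exact hτ (Equiv.ext fun i => (h i).symm)
      obtain ⟨i, hi⟩ := hex
      apply Finset.prod_eq_zero (Finset.mem_univ i)
      simp [hσ, hi]
    · intro h; exact absurd (Finset.mem_univ σ) h
end

section
/- Every singular 2×2 matrix A with nonnegative entries satisfies per(A) ≤ (1/2)·min(r_1 r_2, c_1 c_2), where r_1, r_2 are the row sums and c_1, c_2 the column sums of A. -/
theorem permanent_singular_two_nonneg {A : Matrix (Fin 2) (Fin 2) ℝ}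
    (hpos : ∀ i j, 0 ≤ A i j) (hsing : A.det = 0) :
    permanent A ≤ (1 / 2) * min (∏ i, ∑ j, A i j) (∏ j, ∑ i, A i j) := by
  have hperm : permanent A = A 0 0 * A 1 1 + A 0 1 * A 1 0 := by
    have h : (Finset.univ : Finset (Equiv.Perm (Fin 2))) = {1, Equiv.swap 0 1} := by decide
    rw [permanent, h, Finset.sum_insert (by decide), Finset.sum_singleton]
    simp [Fin.prod_univ_two]
  rw [Matrix.det_fin_two] at hsing
  have a0 := hpos 0 0; have a1 := hpos 0 1; have a2 := hpos 1 0; have a3 := hpos 1 1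
  have hbc : A 0 1 * A 1 0 = A 0 0 * A 1 1 := by linarith
  have habcd : A 0 0 * A 1 1 * (A 0 1 * A 1 0) = (A 0 0 * A 1 1)^2 := by
    rw [hbc]; ring
  have had : 0 ≤ A 0 0 * A 1 1 := mul_nonneg a0 a3
  simp only [Fin.prod_univ_two, Fin.sum_univ_two, hperm]
  rw [mul_min_of_nonneg _ _ (by norm_num : (0:ℝ) ≤ 1/2), le_min_iff]
  constructor
  · nlinarith [sq_nonneg (A 0 0 * A 1 0 - A 0 1 * A 1 1), habcd, had,
      mul_nonneg a0 a2, mul_nonneg a1 a3,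
      mul_nonneg (mul_nonneg a0 a2) (mul_nonneg a1 a3)]
  · nlinarith [sq_nonneg (A 0 0 * A 0 1 - A 1 0 * A 1 1), habcd, had,
      mul_nonneg a0 a1, mul_nonneg a2 a3,
      mul_nonneg (mul_nonneg a0 a1) (mul_nonneg a2 a3)]
end

section
/- Every singular 3×3 row-stochastic matrix A satisfies per(A) ≤ 1/2. -/
lemma permanent_fin_three (A : Matrix (Fin 3) (Fin 3) ℝ) :
    permanent A = A 0 0 * A 1 1 * A 2 2 + A 0 0 * A 1 2 * A 2 1 + A 0 1 * A 1 0 * A 2 2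
      + A 0 1 * A 1 2 * A 2 0 + A 0 2 * A 1 0 * A 2 1 + A 0 2 * A 1 1 * A 2 0 := by
  rw [permanent]
  rw [show (Finset.univ : Finset (Equiv.Perm (Fin 3))) =
    {Equiv.refl _, Equiv.swap 0 1, Equiv.swap 0 2, Equiv.swap 1 2,
     Equiv.swap 0 1 * Equiv.swap 1 2, Equiv.swap 1 2 * Equiv.swap 0 1} from by decide]
  rw [Finset.sum_insert (by decide), Finset.sum_insert (by decide),
      Finset.sum_insert (by decide), Finset.sum_insert (by decide),
      Finset.sum_insert (by decide), Finset.sum_singleton]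
  have h : ∀ (σ : Equiv.Perm (Fin 3)) (i j : Fin 3), σ i = j → A i (σ i) = A i j := by
    intro σ i j hh; rw [hh]
  simp only [Fin.prod_univ_three]
  rw [h (Equiv.refl _) 0 0 (by decide), h (Equiv.refl _) 1 1 (by decide), h (Equiv.refl _) 2 2 (by decide),
      h (Equiv.swap 0 1) 0 1 (by decide), h (Equiv.swap 0 1) 1 0 (by decide), h (Equiv.swap 0 1) 2 2 (by decide),
      h (Equiv.swap 0 2) 0 2 (by decide), h (Equiv.swap 0 2) 1 1 (by decide), h (Equiv.swap 0 2) 2 0 (by decide),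
      h (Equiv.swap 1 2) 0 0 (by decide), h (Equiv.swap 1 2) 1 2 (by decide), h (Equiv.swap 1 2) 2 1 (by decide),
      h (Equiv.swap 0 1 * Equiv.swap 1 2) 0 1 (by decide), h (Equiv.swap 0 1 * Equiv.swap 1 2) 1 2 (by decide),
      h (Equiv.swap 0 1 * Equiv.swap 1 2) 2 0 (by decide),
      h (Equiv.swap 1 2 * Equiv.swap 0 1) 0 2 (by decide), h (Equiv.swap 1 2 * Equiv.swap 0 1) 1 0 (by decide),
      h (Equiv.swap 1 2 * Equiv.swap 0 1) 2 1 (by decide)]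
  ring

lemma quarter' {x y z : ℝ} (hx : 0 ≤ x) (hy : 0 ≤ y) (hz : 0 ≤ z)
    (h : x + y + z = 1) : x * y ≤ 1/4 := by
  nlinarith [sq_nonneg (x - y), mul_nonneg hz (add_nonneg hx hy), sq_nonneg z]

lemma bracket' {p1 p2 p3 q1 q2 q3 : ℝ}
    (hp1 : 0 ≤ p1) (hp2 : 0 ≤ p2) (hp3 : 0 ≤ p3)
    (hq1 : 0 ≤ q1) (hq2 : 0 ≤ q2) (hq3 : 0 ≤ q3)
    (hps : p1 + p2 + p3 = 1) (hqs : q1 + q2 + q3 = 1) :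
    p1*p2*q3 + p1*p3*q2 + p2*p3*q1 ≤ 1/4 := by
  have k12 := quarter' hp1 hp2 hp3 hps
  have k13 := quarter' hp1 hp3 hp2 (by linarith)
  have k23 := quarter' hp2 hp3 hp1 (by linarith)
  have m1 := mul_le_mul_of_nonneg_right k12 hq3
  have m2 := mul_le_mul_of_nonneg_right k13 hq2
  have m3 := mul_le_mul_of_nonneg_right k23 hq1
  linarith

lemma final' {p1 p2 p3 q1 q2 q3 s t : ℝ} (hs0 : 0 ≤ s) (ht0 : 0 ≤ t) (hst : s + t = 1)
    (hbP : p1*p2*q3 + p1*p3*q2 + p2*p3*q1 ≤ 1/4)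
    (hbQ : q1*q2*p3 + q1*q3*p2 + q2*q3*p1 ≤ 1/4) :
    p1*q2*(s*p3+t*q3) + p1*q3*(s*p2+t*q2) + p2*q1*(s*p3+t*q3)
      + p2*q3*(s*p1+t*q1) + p3*q1*(s*p2+t*q2) + p3*q2*(s*p1+t*q1) ≤ 1/2 := by
  nlinarith [mul_nonneg hs0 (sub_nonneg.mpr hbP), mul_nonneg ht0 (sub_nonneg.mpr hbQ)]

lemma key' (p1 p2 p3 q1 q2 q3 r1 r2 r3 a b c : ℝ)
    (hp1 : 0 ≤ p1) (hp2 : 0 ≤ p2) (hp3 : 0 ≤ p3)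
    (hq1 : 0 ≤ q1) (hq2 : 0 ≤ q2) (hq3 : 0 ≤ q3)
    (hps : p1 + p2 + p3 = 1) (hqs : q1 + q2 + q3 = 1)
    (ha : a ≠ 0) (hab : |b| ≤ |a|) (hac : |c| ≤ |a|) (hsum : a + b + c = 0)
    (h1 : b * p1 + c * q1 + a * r1 = 0)
    (h2 : b * p2 + c * q2 + a * r2 = 0)
    (h3 : b * p3 + c * q3 + a * r3 = 0) :
    p1*q2*r3 + p1*q3*r2 + p2*q1*r3 + p2*q3*r1 + p3*q1*r2 + p3*q2*r1 ≤ 1/2 := by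
  set s : ℝ := -b / a with hs_def
  set t : ℝ := -c / a with ht_def
  have hst : s + t = 1 := by
    rw [hs_def, ht_def]; field_simp; linear_combination (-1) * hsum
  have hs1 : |s| ≤ 1 := by
    rw [hs_def, abs_div, abs_neg]
    exact (div_le_one (abs_pos.mpr ha)).mpr hab
  have ht1 : |t| ≤ 1 := by
    rw [ht_def, abs_div, abs_neg]
    exact (div_le_one (abs_pos.mpr ha)).mpr hac
  have hs0 : 0 ≤ s := by linarith [le_abs_self t, abs_le.mp ht1]
  have ht0 : 0 ≤ t := by linarith [le_abs_self s, abs_le.mp hs1]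
  have e1 : r1 = s * p1 + t * q1 := by
    rw [hs_def, ht_def]; field_simp; linear_combination h1
  have e2 : r2 = s * p2 + t * q2 := by
    rw [hs_def, ht_def]; field_simp; linear_combination h2
  have e3 : r3 = s * p3 + t * q3 := by
    rw [hs_def, ht_def]; field_simp; linear_combination h3
  rw [e1, e2, e3]
  exact final' hs0 ht0 hst (bracket' hp1 hp2 hp3 hq1 hq2 hq3 hps hqs)
    (bracket' hq1 hq2 hq3 hp1 hp2 hp3 hqs hps)

theorem permanent_singular_three {A : Matrix (Fin 3) (Fin 3) ℝ}
    (hpos : ∀ i j, 0 ≤ A i j) (hrow : ∀ i, ∑ j, A i j = 1) (hsing : A.det = 0) :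
    permanent A ≤ 1 / 2 := by
  obtain ⟨v, hv0, hv⟩ := (Matrix.exists_vecMul_eq_zero_iff).mpr hsing
  have hvj : ∀ j, v 0 * A 0 j + v 1 * A 1 j + v 2 * A 2 j = 0 := by
    intro j
    have := congrFun hv j
    simpa [Matrix.vecMul, dotProduct, Fin.sum_univ_three] using this
  have hr : ∀ i, A i 0 + A i 1 + A i 2 = 1 := by
    intro i; have := hrow i; rwa [Fin.sum_univ_three] at this
  have hvsum : v 0 + v 1 + v 2 = 0 := by
    linear_combination (hvj 0) + (hvj 1) + (hvj 2) - v 0 * (hr 0) - v 1 * (hr 1) - v 2 * (hr 2)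
  have hnz : ∀ m : Fin 3, (∀ i, |v i| ≤ |v m|) → v m ≠ 0 := by
    intro m hm h0
    apply hv0
    funext i
    have : |v i| ≤ 0 := by simpa [h0] using hm i
    simpa using abs_nonpos_iff.mp this
  rw [permanent_fin_three]
  rcases le_total (|v 0|) (|v 1|) with h01 | h01
  · rcases le_total (|v 1|) (|v 2|) with h12 | h12
    · -- max |v 2| : row 2 is combination of rows 0, 1
      have hb : |v 0| ≤ |v 2| := le_trans h01 h12
      have hne : v 2 ≠ 0 := hnz 2 (by intro i; fin_cases i <;> simpa using by first | exact hb | exact h12 | exact le_refl (|v 2|))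
      have hk := key' (A 0 0) (A 0 1) (A 0 2) (A 1 0) (A 1 1) (A 1 2) (A 2 0) (A 2 1) (A 2 2)
        (v 2) (v 0) (v 1)
        (hpos 0 0) (hpos 0 1) (hpos 0 2) (hpos 1 0) (hpos 1 1) (hpos 1 2)
        (hr 0) (hr 1) hne hb h12 (by linarith)
        (by linear_combination hvj 0) (by linear_combination hvj 1) (by linear_combination hvj 2)
      linarith [hk]
    · -- max |v 1| : row 1 is combination of rows 0, 2
      have hne : v 1 ≠ 0 := hnz 1 (by intro i; fin_cases i <;> simpa using by first | exact h01 | exact h12 | exact le_refl (|v 1|))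
      have hk := key' (A 0 0) (A 0 1) (A 0 2) (A 2 0) (A 2 1) (A 2 2) (A 1 0) (A 1 1) (A 1 2)
        (v 1) (v 0) (v 2)
        (hpos 0 0) (hpos 0 1) (hpos 0 2) (hpos 2 0) (hpos 2 1) (hpos 2 2)
        (hr 0) (hr 2) hne h01 h12 (by linarith)
        (by linear_combination hvj 0) (by linear_combination hvj 1) (by linear_combination hvj 2)
      linarith [hk]
  · rcases le_total (|v 0|) (|v 2|) with h02 | h02
    · -- max |v 2|
      have hb : |v 1| ≤ |v 2| := le_trans h01 h02
      have hne : v 2 ≠ 0 := hnz 2 (by intro i; fin_cases i <;> simpa using by first | exact h02 | exact hb | exact le_refl (|v 2|))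
      have hk := key' (A 0 0) (A 0 1) (A 0 2) (A 1 0) (A 1 1) (A 1 2) (A 2 0) (A 2 1) (A 2 2)
        (v 2) (v 0) (v 1)
        (hpos 0 0) (hpos 0 1) (hpos 0 2) (hpos 1 0) (hpos 1 1) (hpos 1 2)
        (hr 0) (hr 1) hne h02 hb (by linarith)
        (by linear_combination hvj 0) (by linear_combination hvj 1) (by linear_combination hvj 2)
      linarith [hk]
    · -- max |v 0| : row 0 is combination of rows 1, 2
      have hne : v 0 ≠ 0 := hnz 0 (by intro i; fin_cases i <;> simpa using by first | exact h01 | exact h02 | exact le_refl (|v 0|))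
      have hk := key' (A 1 0) (A 1 1) (A 1 2) (A 2 0) (A 2 1) (A 2 2) (A 0 0) (A 0 1) (A 0 2)
        (v 0) (v 1) (v 2)
        (hpos 1 0) (hpos 1 1) (hpos 1 2) (hpos 2 0) (hpos 2 1) (hpos 2 2)
        (hr 1) (hr 2) hne h01 h02 (by linarith)
        (by linear_combination hvj 0) (by linear_combination hvj 1) (by linear_combination hvj 2)
      linarith [hk]
end

section
/- Every singular 3×3 row-stochastic matrix A and every permutation σ ∈ S_3 satisfy Π_{i=1}^3 a_{i,σ(i)} ≤ 1/4. -/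
theorem key (a b c d e f g h i : ℝ)
    (ha : 0 ≤ a) (hb : 0 ≤ b) (hc : 0 ≤ c) (hd : 0 ≤ d) (he : 0 ≤ e) (hf : 0 ≤ f)
    (hg : 0 ≤ g) (hh : 0 ≤ h) (hi : 0 ≤ i)
    (r1 : a + b + c = 1) (r2 : d + e + f = 1) (r3 : g + h + i = 1)
    (hdet : a*e*i + b*f*g + c*d*h - c*e*g - b*d*i - a*f*h = 0) :
    a*e*i ≤ 1/4 := by
  rcases le_or_gt (a + e) 1 with hae | hae
  · nlinarith [sq_nonneg (a - e), mul_nonneg (mul_nonneg ha he) hi, mul_nonneg ha he]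
  rcases le_or_gt (a + i) 1 with hai | hai
  · nlinarith [sq_nonneg (a - i), mul_nonneg (mul_nonneg ha hi) he, mul_nonneg ha hi]
  rcases le_or_gt (e + i) 1 with hei | hei
  · nlinarith [sq_nonneg (e - i), mul_nonneg (mul_nonneg he hi) ha, mul_nonneg he hi]
  exfalso
  have hid : (e-b)*(i-c) - (f-c)*(h-b) = 0 := by
    have h1 : a = 1 - b - c := by linarith
    have h2 : d = 1 - e - f := by linarith
    have h3 : g = 1 - h - i := by linarith
    rw [h1, h2, h3] at hdet
    linarith [hdet]
  have h1 : b + c < e := by linarith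
  have h2 : b + c < i := by linarith
  have h3 : f < i := by linarith
  have h4 : h < e := by linarith
  rcases le_or_gt f c with hfc | hfc
  · rcases le_or_gt h b with hhb | hhb
    · have c1 : (c-f)*(b-h) < (e-b)*(i-c) :=
        mul_lt_mul' (by linarith) (by linarith) (by linarith) (by linarith)
      nlinarith [hid, c1]
    · nlinarith [mul_pos (by linarith : (0:ℝ) < e - b) (by linarith : (0:ℝ) < i - c),
        mul_nonneg (by linarith : (0:ℝ) ≤ c - f) (by linarith : (0:ℝ) ≤ h - b)]
  · rcases le_or_gt h b with hhb | hhb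
    · nlinarith [mul_pos (by linarith : (0:ℝ) < e - b) (by linarith : (0:ℝ) < i - c),
        mul_nonneg (by linarith : (0:ℝ) ≤ f - c) (by linarith : (0:ℝ) ≤ b - h)]
    · have c1 : (f-c)*(h-b) < (i-c)*(h-b) :=
        mul_lt_mul_of_pos_right (by linarith) (by linarith)
      have c2 : (i-c)*(h-b) < (i-c)*(e-b) :=
        mul_lt_mul_of_pos_left (by linarith) (by linarith)
      nlinarith [hid, c1, c2]

theorem diagProd_singular_three {A : Matrix (Fin 3) (Fin 3) ℝ}
    (hpos : ∀ i j, 0 ≤ A i j) (hrow : ∀ i, ∑ j, A i j = 1) (hsing : A.det = 0)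
    (σ : Equiv.Perm (Fin 3)) :
    (∏ i, A i (σ i)) ≤ 1 / 4 := by
  set B : Matrix (Fin 3) (Fin 3) ℝ := A.submatrix id σ with hB
  have hBdet : B.det = 0 := by
    rw [hB, Matrix.det_permute', hsing, mul_zero]
  have hBrow : ∀ i, B i 0 + B i 1 + B i 2 = 1 := by
    intro i
    have := hrow i
    rw [← Equiv.sum_comp σ (A i)] at this
    simpa [Fin.sum_univ_three, hB, Matrix.submatrix_apply] using this
  have hBdet' : B 0 0 * B 1 1 * B 2 2 + B 0 1 * B 1 2 * B 2 0 + B 0 2 * B 1 0 * B 2 1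
      - B 0 2 * B 1 1 * B 2 0 - B 0 1 * B 1 0 * B 2 2 - B 0 0 * B 1 2 * B 2 1 = 0 := by
    rw [Matrix.det_fin_three] at hBdet
    linarith [hBdet]
  have hprod : (∏ i, A i (σ i)) = B 0 0 * B 1 1 * B 2 2 := by
    simp [Fin.prod_univ_three, hB, Matrix.submatrix_apply]
  rw [hprod]
  exact key (B 0 0) (B 0 1) (B 0 2) (B 1 0) (B 1 1) (B 1 2) (B 2 0) (B 2 1) (B 2 2)
    (hpos 0 _) (hpos 0 _) (hpos 0 _) (hpos 1 _) (hpos 1 _) (hpos 1 _)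
    (hpos 2 _) (hpos 2 _) (hpos 2 _) (hBrow 0) (hBrow 1) (hBrow 2) hBdet'
end
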